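/- If X₁,…,X_d are random variables with X_i ~ F_i such that |X₁|,…,|X_d| are comonotonic and ∏_{i=1}^d X_i ≥ 0 almost surely, then E(∏_{i=1}^d X_i) = E(∏_{i=1}^d G_i⁻¹(U)) where G_i is the distribution function of |X_i| and U ~ Uniform[0,1], and (X₁,…,X_d) attains the maximum of E(Y₁⋯Y_d) over all couplings with Y_i ~ F_i. -/

import Mathlib

open MeasureTheory Set

/-- Generalized inverse (quantile function). -/
noncomputable def quantile (ν : Measure ℝ) (u : ℝ) : ℝ :=
  sInf {x : ℝ | u ≤ (ν (Iic x)).toReal}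

/-- A family of random variables is comonotonic if all of them are (a.s.) nondecreasing
functions of a single random variable. -/
def Comonotonic {Ω ι : Type*} [MeasurableSpace Ω] (μ : Measure Ω) (Y : ι → Ω → ℝ) : Prop :=
  ∃ (T : Ω → ℝ) (f : ι → ℝ → ℝ), (∀ i, Monotone (f i)) ∧ ∀ i, ∀ᵐ ω ∂μ, Y i ω = f i (T ω)

/-!
For nonnegative `Z_i`, Tonelli gives `E ∏ Z_i = ∫_{t ≥ 0} P(Z_i > t_i for all i) dt`, and
`P(⋂ {Z_i > t_i}) ≤ min_i P(Z_i > t_i)`, with equality when the `Z_i` are comonotonic because the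
events `{Z_i > t_i}` are then nested. So `E ∏ |Y_i|` is largest, among couplings with given laws
of the `|Y_i|`, for a comonotonic coupling, and this largest value depends only on those laws.
Apply this to the `|X_i|` (note `∏ X_i = ∏ |X_i|` a.s.) and to the comonotonic coupling
`(G_i⁻¹(U))_i`, which has the same marginals since `G_i⁻¹(U) ~ G_i`.
-/

open ProbabilityTheory
open scoped ENNReal

section FrechetBound

variable {Ω ι : Type*} [MeasurableSpace Ω] {μ : Measure Ω}

theorem Comonotonic.congr_ae {Z Z' : ι → Ω → ℝ} (h : Comonotonic μ Z)
    (hZ : ∀ i, Z i =ᵐ[μ] Z' i) : Comonotonic μ Z' := by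
  obtain ⟨T, f, hf, hT⟩ := h
  exact ⟨T, f, hf, fun i => (hZ i).symm.trans (hT i)⟩

theorem comonotonic_of_monotoneOn_range {φ : ℝ → ℝ} (hφ : Monotone φ) {g : ι → ℝ → ℝ}
    (hg : ∀ i, MonotoneOn (g i) (range φ)) {V : Ω → ℝ} (hV : ∀ᵐ ω ∂μ, V ω ∈ range φ) :
    Comonotonic μ fun i ω => g i (V ω) :=
  ⟨fun ω => Function.invFun φ (V ω), fun i => g i ∘ φ,
    fun i _ _ hab => hg i (mem_range_self _) (mem_range_self _) (hφ hab),
    fun i => hV.mono fun ω hω => by simp only [Function.comp_apply, Function.invFun_eq hω]⟩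

theorem Comonotonic.measure_iInter_preimage_Ioi_eq_iInf [Finite ι] [Nonempty ι] {Z : ι → Ω → ℝ}
    (h : Comonotonic μ Z) (t : ι → ℝ) :
    μ (⋂ i, Z i ⁻¹' Ioi (t i)) = ⨅ i, μ (Z i ⁻¹' Ioi (t i)) := by
  obtain ⟨T, f, hf, hZ⟩ := h
  let U : ι → UpperSet ℝ := fun i =>
    ⟨{s | t i < f i s}, fun _ _ hab hs => hs.trans_le (hf i hab)⟩
  -- Upper sets of `ℝ` are totally ordered, so the events `{Z i > t i} = {T ∈ U i}` are a.s.
  -- nested, and the smallest one is their intersection.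
  obtain ⟨i₀, hi₀⟩ := Finite.exists_max U
  have hsub : Z i₀ ⁻¹' Ioi (t i₀) ≤ᵐ[μ] ⋂ i, Z i ⁻¹' Ioi (t i) :=
    (ae_all_iff.2 hZ).mono fun ω hω (hω₀ : t i₀ < Z i₀ ω) => mem_iInter.2 fun i =>
      show t i < Z i ω from hω i ▸ hi₀ i (show t i₀ < f i₀ (T ω) from hω i₀ ▸ hω₀)
  exact le_antisymm (le_iInf fun i => measure_mono (iInter_subset _ i))
    ((iInf_le _ i₀).trans (measure_mono_ae hsub))

theorem lintegral_prod_ofReal_eq_setLIntegral_measure_iInter [Fintype ι] [SFinite μ]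
    {Z : ι → Ω → ℝ} (hZ : ∀ i, Measurable (Z i)) :
    ∫⁻ ω, ∏ i, ENNReal.ofReal (Z i ω) ∂μ
      = ∫⁻ t in univ.pi fun _ => Ici 0, μ (⋂ i, Z i ⁻¹' Ioi (t i)) := by
  set E : Set (Ω × (ι → ℝ)) := {p | ∀ i, p.2 i ∈ Ico 0 (Z i p.1)}
  have hE : MeasurableSet E := by
    simp only [E, ofPred_forall]
    refine MeasurableSet.iInter fun i => ?_
    have hsnd : Measurable fun p : Ω × (ι → ℝ) => p.2 i :=
      (measurable_pi_apply i).comp measurable_snd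
    exact (measurableSet_le measurable_const hsnd).inter
      (measurableSet_lt hsnd ((hZ i).comp measurable_fst))
  have hsection : ∀ t : ι → ℝ, μ ((fun ω => (ω, t)) ⁻¹' E)
      = (univ.pi fun _ => Ici 0).indicator (fun t => μ (⋂ i, Z i ⁻¹' Ioi (t i))) t := by
    intro t
    by_cases ht : t ∈ univ.pi fun _ => Ici (0 : ℝ)
    · rw [indicator_of_mem ht]
      simp only [mem_univ_pi, mem_Ici] at ht
      congr 1
      ext ω
      simp [E, ht]
    · rw [indicator_of_notMem ht]
      obtain ⟨i, hi⟩ : ∃ i, t i < 0 := by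
        simpa only [mem_univ_pi, mem_Ici, not_forall, not_le] using ht
      convert measure_empty (μ := μ)
      ext ω
      simp only [E, mem_preimage, mem_ofPred_eq, mem_Ico, mem_empty_iff_false, iff_false]
      exact fun h => (h i).1.not_gt hi
  calc ∫⁻ ω, ∏ i, ENNReal.ofReal (Z i ω) ∂μ
      = ∫⁻ ω, volume (Prod.mk ω ⁻¹' E) ∂μ := by
        refine lintegral_congr fun ω => ?_
        have : Prod.mk ω ⁻¹' E = univ.pi fun i => Ico 0 (Z i ω) := by ext; simp [E]
        simp [this, Real.volume_pi_Ico]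
    _ = ∫⁻ t, μ ((fun ω => (ω, t)) ⁻¹' E) :=
        (Measure.prod_apply hE).symm.trans (Measure.prod_apply_symm hE)
    _ = _ := by
        simp_rw [hsection]
        exact lintegral_indicator (MeasurableSet.univ_pi fun _ => measurableSet_Ici) _

-- The integral over `t ≥ 0` of the Fréchet–Hoeffding upper bound `min_i P(Z_i > t_i)` on the
-- joint survival function of random variables `Z_i ~ ν_i`.
noncomputable def frechetBound [Fintype ι] (ν : ι → Measure ℝ) : ℝ≥0∞ :=
  ∫⁻ t in univ.pi fun _ => Ici 0, ⨅ i, ν i (Ioi (t i))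

theorem lintegral_prod_ofReal_le_frechetBound [Fintype ι] [SFinite μ] {Z : ι → Ω → ℝ}
    (hZ : ∀ i, Measurable (Z i)) :
    ∫⁻ ω, ∏ i, ENNReal.ofReal (Z i ω) ∂μ ≤ frechetBound fun i => μ.map (Z i) := by
  rw [lintegral_prod_ofReal_eq_setLIntegral_measure_iInter hZ]
  refine lintegral_mono fun t => le_iInf fun i => ?_
  rw [Measure.map_apply (hZ i) measurableSet_Ioi]
  exact measure_mono (iInter_subset _ i)

theorem Comonotonic.lintegral_prod_ofReal_eq_frechetBound [Fintype ι] [Nonempty ι] [SFinite μ]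
    {Z : ι → Ω → ℝ} (h : Comonotonic μ Z) (hZ : ∀ i, AEMeasurable (Z i) μ) :
    ∫⁻ ω, ∏ i, ENNReal.ofReal (Z i ω) ∂μ = frechetBound fun i => μ.map (Z i) := by
  set Z' : ι → Ω → ℝ := fun i => (hZ i).mk
  have hZ' : ∀ i, Measurable (Z' i) := fun i => (hZ i).measurable_mk
  have hZZ' : ∀ᵐ ω ∂μ, ∀ i, Z i ω = Z' i ω := ae_all_iff.2 fun i => (hZ i).ae_eq_mk
  have hmap : ∀ i, μ.map (Z i) = μ.map (Z' i) := fun i => Measure.map_congr (hZ i).ae_eq_mk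
  calc ∫⁻ ω, ∏ i, ENNReal.ofReal (Z i ω) ∂μ = ∫⁻ ω, ∏ i, ENNReal.ofReal (Z' i ω) ∂μ :=
        lintegral_congr_ae (hZZ'.mono fun ω hω => by simp only [hω])
    _ = ∫⁻ t in univ.pi fun _ => Ici 0, ⨅ i, μ (Z' i ⁻¹' Ioi (t i)) := by
        rw [lintegral_prod_ofReal_eq_setLIntegral_measure_iInter hZ']
        have hcom' : Comonotonic μ Z' := h.congr_ae fun i => (hZ i).ae_eq_mk
        simp_rw [hcom'.measure_iInter_preimage_Ioi_eq_iInf]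
    _ = frechetBound fun i => μ.map (Z i) := by
        rw [funext hmap, frechetBound]
        simp_rw [Measure.map_apply (hZ' _) measurableSet_Ioi]

theorem Comonotonic.integral_prod_eq_frechetBound [Fintype ι] [Nonempty ι] [SFinite μ]
    {Z : ι → Ω → ℝ} (h : Comonotonic μ Z) (hZ : ∀ i, AEMeasurable (Z i) μ)
    (hZ₀ : ∀ i, 0 ≤ᵐ[μ] Z i) :
    ∫ ω, ∏ i, Z i ω ∂μ = (frechetBound fun i => μ.map (Z i)).toReal := by
  have hZ₀' : ∀ᵐ ω ∂μ, ∀ i, 0 ≤ Z i ω := ae_all_iff.2 hZ₀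
  rw [integral_eq_lintegral_of_nonneg_ae (hZ₀'.mono fun ω hω => Finset.prod_nonneg fun i _ => hω i)
    (Finset.aemeasurable_fun_prod _ fun i _ => hZ i).aestronglyMeasurable,
    ← h.lintegral_prod_ofReal_eq_frechetBound hZ]
  exact congrArg _ (lintegral_congr_ae (hZ₀'.mono fun ω hω =>
    ENNReal.ofReal_prod_of_nonneg fun i _ => hω i))

theorem enorm_prod_eq_prod_ofReal_abs [Fintype ι] (x : ι → ℝ) :
    ‖∏ i, x i‖ₑ = ∏ i, ENNReal.ofReal |x i| := by
  simp only [← Real.enorm_eq_ofReal_abs, enorm_eq_nnnorm, nnnorm_prod, ENNReal.ofNNReal_finsetProd]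

theorem integral_prod_le_frechetBound [Fintype ι] [SFinite μ] {Y : ι → Ω → ℝ}
    (hY : ∀ i, Measurable (Y i))
    (hfin : (frechetBound fun i => μ.map fun ω => |Y i ω|) ≠ ⊤) :
    ∫ ω, ∏ i, Y i ω ∂μ ≤ (frechetBound fun i => μ.map fun ω => |Y i ω|).toReal :=
  calc ∫ ω, ∏ i, Y i ω ∂μ ≤ ∫ ω, ‖∏ i, Y i ω‖ ∂μ :=
        (Real.le_norm_self _).trans (norm_integral_le_integral_norm _)
    _ = (∫⁻ ω, ‖∏ i, Y i ω‖ₑ ∂μ).toReal := integral_norm_eq_lintegral_enorm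
        (Finset.measurable_prod _ fun i _ => hY i).aestronglyMeasurable
    _ ≤ _ := by
        refine ENNReal.toReal_mono hfin ?_
        simp_rw [enorm_prod_eq_prod_ofReal_abs]
        exact lintegral_prod_ofReal_le_frechetBound fun i => (hY i).abs

theorem map_abs_Iio_zero {f : Ω → ℝ} (hf : Measurable f) : (μ.map fun ω => |f ω|) (Iio 0) = 0 := by
  rw [Measure.map_apply hf.abs measurableSet_Iio,
    show (fun ω => |f ω|) ⁻¹' Iio 0 = ∅ from
      eq_empty_of_forall_notMem fun ω => (abs_nonneg (f ω)).not_gt, measure_empty]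

theorem map_abs_eq_of_map_eq {Ω' : Type*} [MeasurableSpace Ω'] {μ' : Measure Ω'} {f : Ω → ℝ}
    {g : Ω' → ℝ} (hf : Measurable f) (hg : Measurable g) (h : μ.map f = μ'.map g) :
    (μ.map fun ω => |f ω|) = μ'.map fun ω => |g ω| :=
  calc μ.map (abs ∘ f) = (μ.map f).map abs := (Measure.map_map measurable_abs hf).symm
    _ = μ'.map (abs ∘ g) := by rw [h, Measure.map_map measurable_abs hg]

section Quantile

variable (ν : Measure ℝ) {u : ℝ}

theorem nonempty_setOf_le_cdf (h1 : u < 1) : {x | u ≤ cdf ν x}.Nonempty :=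
  let ⟨x, hx⟩ := ((tendsto_cdf_atTop ν).eventually_const_lt h1).exists
  ⟨x, hx.le⟩

theorem bddBelow_setOf_le_cdf (h0 : 0 < u) : BddBelow {x | u ≤ cdf ν x} := by
  obtain ⟨y, hy⟩ := ((tendsto_cdf_atBot ν).eventually_lt_const h0).exists
  exact ⟨y, fun x hx => le_of_not_gt fun hxy => hy.not_ge (hx.trans (monotone_cdf ν hxy.le))⟩

variable [IsProbabilityMeasure ν]

theorem quantile_eq_sInf_cdf : quantile ν u = sInf {x | u ≤ cdf ν x} := by
  simp only [quantile, cdf_eq_real, measureReal_def]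

theorem le_cdf_quantile (h1 : u < 1) : u ≤ cdf ν (quantile ν u) := by
  rw [← (cdf ν).iInf_Ioi_eq]
  refine le_ciInf fun r => ?_
  obtain ⟨y, hy, hyr⟩ := exists_lt_of_csInf_lt (nonempty_setOf_le_cdf ν h1)
    (by rw [← quantile_eq_sInf_cdf]; exact r.2)
  exact hy.trans (monotone_cdf ν hyr.le)

theorem quantile_le_iff (h0 : 0 < u) (h1 : u < 1) {x : ℝ} :
    quantile ν u ≤ x ↔ u ≤ cdf ν x :=
  ⟨fun h => (le_cdf_quantile ν h1).trans (monotone_cdf ν h), fun h => by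
    rw [quantile_eq_sInf_cdf]; exact csInf_le (bddBelow_setOf_le_cdf ν h0) h⟩

theorem quantile_monotoneOn : MonotoneOn (quantile ν) (Ioo 0 1) := fun _ hu _ hv huv =>
  (quantile_le_iff ν hu.1 hu.2).2 (huv.trans (le_cdf_quantile ν hv.2))

theorem quantile_nonneg (hν : ν (Iio 0) = 0) (h0 : 0 < u) (h1 : u < 1) : 0 ≤ quantile ν u := by
  by_contra! hq
  have hcdf : cdf ν (quantile ν u) = 0 := by
    rw [cdf_eq_real, measureReal_def, measure_mono_null (Iic_subset_Iio.2 hq) hν,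
      ENNReal.toReal_zero]
  linarith [le_cdf_quantile ν h1]

instance : IsProbabilityMeasure (volume.restrict (Ioo (0 : ℝ) 1)) :=
  ⟨by simp [Real.volume_Ioo]⟩

theorem aemeasurable_quantile : AEMeasurable (quantile ν) (volume.restrict (Ioo 0 1)) :=
  aemeasurable_restrict_of_monotoneOn measurableSet_Ioo (quantile_monotoneOn ν)

theorem map_quantile : (volume.restrict (Ioo 0 1)).map (quantile ν) = ν := by
  have := Measure.isProbabilityMeasure_map (aemeasurable_quantile ν)
  refine Measure.ext_of_Iic _ _ fun x => ?_
  have hpre : quantile ν ⁻¹' Iic x =ᵐ[volume.restrict (Ioo 0 1)] Iic (cdf ν x) :=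
    (ae_restrict_mem measurableSet_Ioo).mono fun u hu => propext (quantile_le_iff ν hu.1 hu.2)
  rw [Measure.map_apply_of_aemeasurable (aemeasurable_quantile ν) measurableSet_Iic,
    measure_congr hpre, Measure.restrict_congr_set Ioo_ae_eq_Ioc,
    Measure.restrict_apply measurableSet_Iic, inter_comm, Ioc_inter_Iic,
    min_eq_right (cdf_le_one ν x), Real.volume_Ioc, sub_zero, ofReal_cdf]

end Quantile

theorem comonotonic_quantile (ν : ι → Measure ℝ) [∀ i, IsProbabilityMeasure (ν i)] :
    Comonotonic (volume.restrict (Ioo 0 1)) fun i => quantile (ν i) := by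
  refine comonotonic_of_monotoneOn_range (V := id) Real.sigmoid_monotone (fun i => ?_) ?_
  · rw [Real.range_sigmoid]; exact quantile_monotoneOn (ν i)
  · rw [Real.range_sigmoid]; exact ae_restrict_mem measurableSet_Ioo

end FrechetBound

/-- If the `|X_i|` are comonotonic and `∏ X_i ≥ 0` a.s., then `(X₁,…,X_d)` attains the
maximum expected product among all couplings with the same marginals, and
`E(∏ X_i) = E(∏ G_i⁻¹(U))` where `G_i` is the distribution function of `|X_i|`. -/
theorem stmt_4 {Ω : Type*} [MeasurableSpace Ω] (μ : Measure Ω) [IsProbabilityMeasure μ]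
    (d : ℕ) (X : Fin d → Ω → ℝ) (hm : ∀ i, Measurable (X i))
    (hcom : Comonotonic μ (fun i ω => |X i ω|))
    (hpos : ∀ᵐ ω ∂μ, 0 ≤ ∏ i, X i ω)
    (hInt : Integrable (fun ω => ∏ i, X i ω) μ) :
    (∫ ω, ∏ i, X i ω ∂μ
        = ∫ u in Icc (0:ℝ) 1, ∏ i, quantile (μ.map (fun ω => |X i ω|)) u) ∧
    (∀ (Ω' : Type*) [MeasurableSpace Ω'] (μ' : Measure Ω') [IsProbabilityMeasure μ']
        (Y : Fin d → Ω' → ℝ), (∀ i, Measurable (Y i)) →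
        (∀ i, μ'.map (Y i) = μ.map (X i)) →
        Integrable (fun ω => ∏ i, Y i ω) μ' →
        ∫ ω, ∏ i, Y i ω ∂μ' ≤ ∫ ω, ∏ i, X i ω ∂μ) := by
  rcases isEmpty_or_nonempty (Fin d) with hd | hd
  · simp only [Finset.univ_eq_empty, Finset.prod_empty]
    exact ⟨by simp, fun Ω' _ μ' _ _ _ _ _ => by simp⟩
  set ν : Fin d → Measure ℝ := fun i => μ.map fun ω => |X i ω|
  have hν : ∀ i, IsProbabilityMeasure (ν i) := fun i =>
    Measure.isProbabilityMeasure_map (hm i).abs.aemeasurable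
  have hX : ∫ ω, ∏ i, X i ω ∂μ = (frechetBound ν).toReal := by
    rw [← hcom.integral_prod_eq_frechetBound (fun i => (hm i).abs.aemeasurable)
      fun i => ae_of_all _ fun ω => abs_nonneg _]
    exact integral_congr_ae (hpos.mono fun ω hω => by
      simp only [← Finset.abs_prod, abs_of_nonneg hω])
  have hfin : frechetBound ν ≠ ⊤ := by
    rw [← hcom.lintegral_prod_ofReal_eq_frechetBound fun i => (hm i).abs.aemeasurable]
    simpa only [enorm_prod_eq_prod_ofReal_abs] using hInt.hasFiniteIntegral.ne
  refine ⟨?_, fun Ω' _ μ' _ Y hY hlaw _ => ?_⟩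
  · rw [hX, integral_Icc_eq_integral_Ioo, (comonotonic_quantile ν).integral_prod_eq_frechetBound
      (fun i => aemeasurable_quantile (ν i)) fun i => (ae_restrict_mem measurableSet_Ioo).mono
        fun u hu => quantile_nonneg (ν i) (map_abs_Iio_zero (hm i)) hu.1 hu.2]
    simp_rw [map_quantile]
  · have hlaw_abs : (fun i => μ'.map fun ω => |Y i ω|) = ν :=
      funext fun i => map_abs_eq_of_map_eq (hY i) (hm i) (hlaw i)
    rw [hX, ← hlaw_abs]
    exact integral_prod_le_frechetBound hY (hlaw_abs ▸ hfin)
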